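/- Let ξ > 0, k_c > 0, η1 ∈ ℝ, r > 0, and set z = k_c·r and u_c = k_c·ξ. Then ∫₀^{k_c} k·J₀(k r)·(1 + η1·ξ²·k² + ξ⁴·k⁴) dk = k_c² · [ J₁(z)/z + η1·u_c²·(2z·J₀(z) + (z² − 4)·J₁(z))/z³ + u_c⁴·(4(z³ − 8z)·J₀(z) + (z⁴ − 16z² + 64)·J₁(z))/z⁵ ]. This is the two-dimensional Bessel–Lommel covariance formula: the quantity (2π·η0·ξ²)^{−1} times the left-hand side equals the Bessel–Lommel covariance C^{BL}(r) of Proposition 2 for d = 2. -/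

import Mathlib

open MeasureTheory Real

/-- Bessel function of the first kind of order zero,
`J₀(x) = (1/π) ∫₀^π cos (x sin θ) dθ`. -/
noncomputable def besselJ0 (x : ℝ) : ℝ :=
  (1 / Real.pi) * ∫ θ in (0:ℝ)..Real.pi, Real.cos (x * Real.sin θ)

/-- Bessel function of the first kind of order one,
`J₁(x) = (1/π) ∫₀^π cos (θ − x sin θ) dθ`. -/
noncomputable def besselJ1 (x : ℝ) : ℝ :=
  (1 / Real.pi) * ∫ θ in (0:ℝ)..Real.pi, Real.cos (θ - x * Real.sin θ)

/-!
Differentiating under the integral sign in the defining integrals gives `J₀' = -J₁` (the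
cross term `∫₀^π cos θ cos (x sin θ) dθ` vanishes by the symmetry `θ ↦ π - θ`) and
`(t J₁(t))' = t J₀(t)` (the defect is `∫₀^π (1 - x cos θ) cos (θ - x sin θ) dθ`, the
integral of the derivative of `sin (θ - x sin θ)`). Hence `p J₀ + q · t J₁` has derivative
`(p' + t q) J₀ + (t q' - p) J₁`, and polynomials with `t q' = p` give the Lommel antiderivatives
of `t³ J₀` and `t⁵ J₀`. The substitution `t = k r` and linearity in the spectral polynomial
yield the formula.
-/

open intervalIntegral

theorem hasDerivAt_integral_cos_sub_mul_sin {g : ℝ → ℝ} (hg : Continuous g) (a b x : ℝ) :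
    HasDerivAt (fun y => ∫ θ in a..b, cos (g θ - y * sin θ))
      (∫ θ in a..b, sin θ * sin (g θ - x * sin θ)) x := by
  refine (hasDerivAt_integral_of_dominated_loc_of_deriv_le
    (F := fun y θ => cos (g θ - y * sin θ)) (F' := fun y θ => sin θ * sin (g θ - y * sin θ))
    (bound := fun _ => 1)
    (Metric.ball_mem_nhds x one_pos)
    (.of_forall fun y => (Continuous.aestronglyMeasurable (by fun_prop)))
    (Continuous.intervalIntegrable (by fun_prop) _ _) (by fun_prop)
    (.of_forall fun θ _ y _ => ?_) intervalIntegrable_const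
    (.of_forall fun θ _ y _ => ?_)).2
  · rw [norm_mul]
    exact mul_le_one₀ (abs_sin_le_one θ) (norm_nonneg _) (abs_sin_le_one _)
  · exact ((hasDerivAt_mul_const (sin θ)).const_sub (g θ)).cos.congr_deriv (by ring)

theorem integral_cos_mul_cos_mul_sin_eq_zero (x : ℝ) :
    ∫ θ in 0..π, cos θ * cos (x * sin θ) = 0 := by
  have h := integral_comp_sub_left (fun θ => cos θ * cos (x * sin θ)) π (a := 0) (b := π)
  simp only [cos_pi_sub, sin_pi_sub, neg_mul, intervalIntegral.integral_neg, sub_self,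
    sub_zero] at h
  linarith

theorem integral_cos_sub_mul_sin_eq (x : ℝ) :
    ∫ θ in 0..π, cos (θ - x * sin θ) = ∫ θ in 0..π, sin θ * sin (x * sin θ) := by
  simp_rw [cos_sub]
  rw [intervalIntegral.integral_add (Continuous.intervalIntegrable (by fun_prop) _ _)
    (Continuous.intervalIntegrable (by fun_prop) _ _), integral_cos_mul_cos_mul_sin_eq_zero,
    zero_add]

theorem hasDerivAt_besselJ0 (x : ℝ) : HasDerivAt besselJ0 (-besselJ1 x) x := by
  have h := (hasDerivAt_integral_cos_sub_mul_sin (continuous_const (y := 0)) 0 π x).const_mul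
    (1 / π)
  simp only [zero_sub, cos_neg, sin_neg, mul_neg, intervalIntegral.integral_neg] at h
  rw [besselJ1, integral_cos_sub_mul_sin_eq]
  exact h

theorem integral_one_sub_mul_cos_mul_cos_sub_mul_sin (x : ℝ) :
    ∫ θ in 0..π, (1 - x * cos θ) * cos (θ - x * sin θ) = 0 := by
  have hderiv (θ : ℝ) : HasDerivAt (fun θ => sin (θ - x * sin θ))
      ((1 - x * cos θ) * cos (θ - x * sin θ)) θ := by
    have h : HasDerivAt (fun θ => θ - x * sin θ) (1 - x * cos θ) θ :=
      (hasDerivAt_id' θ).sub ((hasDerivAt_sin θ).const_mul x)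
    exact h.sin.congr_deriv (by ring)
  rw [integral_eq_sub_of_hasDerivAt (fun θ _ => hderiv θ)
    (Continuous.intervalIntegrable (by fun_prop) _ _)]
  simp

theorem hasDerivAt_mul_besselJ1 (x : ℝ) :
    HasDerivAt (fun t => t * besselJ1 t) (x * besselJ0 x) x := by
  have hJ1 := (hasDerivAt_integral_cos_sub_mul_sin continuous_id' 0 π x).const_mul (1 / π)
  have h : HasDerivAt (fun t => t * besselJ1 t)
      (1 * besselJ1 x + x * (1 / π * ∫ θ in 0..π, sin θ * sin (θ - x * sin θ))) x :=
    (hasDerivAt_id' x).mul hJ1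
  refine h.congr_deriv ?_
  have hpoint (θ : ℝ) : (1 - x * cos θ) * cos (θ - x * sin θ)
      = cos (θ - x * sin θ) + x * (sin θ * sin (θ - x * sin θ)) - x * cos (x * sin θ) := by
    have hcos : cos (x * sin θ)
        = cos θ * cos (θ - x * sin θ) + sin θ * sin (θ - x * sin θ) := by
      rw [← cos_sub, sub_sub_cancel]
    rw [hcos]
    ring
  have hsum := integral_one_sub_mul_cos_mul_cos_sub_mul_sin x
  simp_rw [hpoint] at hsum
  rw [intervalIntegral.integral_sub (Continuous.intervalIntegrable (by fun_prop) _ _)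
      (Continuous.intervalIntegrable (by fun_prop) _ _),
    intervalIntegral.integral_add (Continuous.intervalIntegrable (by fun_prop) _ _)
      (Continuous.intervalIntegrable (by fun_prop) _ _),
    intervalIntegral.integral_const_mul, intervalIntegral.integral_const_mul] at hsum
  rw [besselJ0, besselJ1]
  linear_combination (1 / π) * hsum

@[fun_prop]
theorem continuous_besselJ0 : Continuous besselJ0 :=
  Differentiable.continuous fun x => (hasDerivAt_besselJ0 x).differentiableAt

theorem hasDerivAt_mul_besselJ0_add_mul_mul_besselJ1 {p q : ℝ → ℝ} {p' q' t : ℝ}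
    (hp : HasDerivAt p p' t) (hq : HasDerivAt q q' t) :
    HasDerivAt (fun t => p t * besselJ0 t + q t * (t * besselJ1 t))
      ((p' + t * q t) * besselJ0 t + (t * q' - p t) * besselJ1 t) t :=
  ((hp.mul (hasDerivAt_besselJ0 t)).add (hq.mul (hasDerivAt_mul_besselJ1 t))).congr_deriv
    (by ring)

theorem hasDerivAt_lommel_three (t : ℝ) :
    HasDerivAt (fun t => 2 * t ^ 2 * besselJ0 t + (t ^ 2 - 4) * (t * besselJ1 t))
      (t ^ 3 * besselJ0 t) t := by
  refine (hasDerivAt_mul_besselJ0_add_mul_mul_besselJ1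
    ((hasDerivAt_pow 2 t).const_mul 2) ((hasDerivAt_pow 2 t).sub_const 4)).congr_deriv ?_
  push_cast
  ring

theorem hasDerivAt_lommel_five (t : ℝ) :
    HasDerivAt (fun t => (4 * t ^ 4 - 32 * t ^ 2) * besselJ0 t
        + (t ^ 4 - 16 * t ^ 2 + 64) * (t * besselJ1 t)) (t ^ 5 * besselJ0 t) t := by
  refine (hasDerivAt_mul_besselJ0_add_mul_mul_besselJ1 (p := fun t => 4 * t ^ 4 - 32 * t ^ 2)
    (q := fun t => t ^ 4 - 16 * t ^ 2 + 64)
    (((hasDerivAt_pow 4 t).const_mul 4).sub ((hasDerivAt_pow 2 t).const_mul 32))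
    (((hasDerivAt_pow 4 t).sub ((hasDerivAt_pow 2 t).const_mul 16)).add_const 64)).congr_deriv ?_
  push_cast
  ring

theorem integral_pow_mul_comp_mul {f G : ℝ → ℝ} {m : ℕ}
    (hG : ∀ t, HasDerivAt G (t ^ m * f t) t) (hf : Continuous f) {r : ℝ} (hr : r ≠ 0)
    (kc : ℝ) :
    ∫ k in 0..kc, k ^ m * f (k * r) = (G (kc * r) - G 0) / r ^ (m + 1) := by
  have hderiv (k : ℝ) : HasDerivAt (fun k => G (k * r) / r ^ (m + 1)) (k ^ m * f (k * r)) k :=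
    (((hG (k * r)).comp k (hasDerivAt_mul_const r)).div_const _).congr_deriv
      (by field_simp; ring)
  rw [integral_eq_sub_of_hasDerivAt (fun k _ => hderiv k)
    (Continuous.intervalIntegrable (by fun_prop) _ _)]
  simp [sub_div]

theorem integral_mul_besselJ0_mul {r : ℝ} (hr : r ≠ 0) (kc : ℝ) :
    ∫ k in 0..kc, k * besselJ0 (k * r) = kc * besselJ1 (kc * r) / r := by
  have h := integral_pow_mul_comp_mul (m := 1)
    (fun t => (hasDerivAt_mul_besselJ1 t).congr_deriv (by rw [pow_one])) continuous_besselJ0 hr kc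
  simp only [pow_one] at h
  rw [h]
  field_simp
  ring

theorem integral_pow_three_mul_besselJ0_mul {r : ℝ} (hr : r ≠ 0) (kc : ℝ) :
    ∫ k in 0..kc, k ^ 3 * besselJ0 (k * r) = (2 * (kc * r) ^ 2 * besselJ0 (kc * r)
      + ((kc * r) ^ 2 - 4) * (kc * r * besselJ1 (kc * r))) / r ^ 4 := by
  rw [integral_pow_mul_comp_mul hasDerivAt_lommel_three continuous_besselJ0 hr kc]
  simp

theorem integral_pow_five_mul_besselJ0_mul {r : ℝ} (hr : r ≠ 0) (kc : ℝ) :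
    ∫ k in 0..kc, k ^ 5 * besselJ0 (k * r) = ((4 * (kc * r) ^ 4 - 32 * (kc * r) ^ 2)
      * besselJ0 (kc * r) + ((kc * r) ^ 4 - 16 * (kc * r) ^ 2 + 64) * (kc * r * besselJ1 (kc * r)))
      / r ^ 6 := by
  rw [integral_pow_mul_comp_mul hasDerivAt_lommel_five continuous_besselJ0 hr kc]
  simp

theorem bessel_lommel_covariance_dim_two_general (ξ kc η1 r : ℝ)
    (hr : 0 < r)
    (z uc : ℝ) (hz : z = kc * r) (huc : uc = kc * ξ) :
    (∫ k in (0:ℝ)..kc, k * besselJ0 (k * r) * (1 + η1 * ξ ^ 2 * k ^ 2 + ξ ^ 4 * k ^ 4))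
      = kc ^ 2 *
        (besselJ1 z / z
          + η1 * uc ^ 2 * (2 * z * besselJ0 z + (z ^ 2 - 4) * besselJ1 z) / z ^ 3
          + uc ^ 4 * (4 * (z ^ 3 - 8 * z) * besselJ0 z
              + (z ^ 4 - 16 * z ^ 2 + 64) * besselJ1 z) / z ^ 5) ∧
    ∀ η0 : ℝ, 0 < η0 →
      (1 / (2 * Real.pi)) *
          (∫ k in (0:ℝ)..kc, k * besselJ0 (k * r) *
            ((η0 * ξ ^ 2)⁻¹ * (1 + η1 * ξ ^ 2 * k ^ 2 + ξ ^ 4 * k ^ 4)))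
        = (2 * Real.pi * η0 * ξ ^ 2)⁻¹ * (kc ^ 2 *
            (besselJ1 z / z
              + η1 * uc ^ 2 * (2 * z * besselJ0 z + (z ^ 2 - 4) * besselJ1 z) / z ^ 3
              + uc ^ 4 * (4 * (z ^ 3 - 8 * z) * besselJ0 z
                  + (z ^ 4 - 16 * z ^ 2 + 64) * besselJ1 z) / z ^ 5)) := by
  have hsplit : ∫ k in 0..kc, k * besselJ0 (k * r) * (1 + η1 * ξ ^ 2 * k ^ 2 + ξ ^ 4 * k ^ 4)
      = (∫ k in 0..kc, k * besselJ0 (k * r))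
        + η1 * ξ ^ 2 * (∫ k in 0..kc, k ^ 3 * besselJ0 (k * r))
        + ξ ^ 4 * ∫ k in 0..kc, k ^ 5 * besselJ0 (k * r) := by
    rw [← intervalIntegral.integral_const_mul, ← intervalIntegral.integral_const_mul,
      ← intervalIntegral.integral_add, ← intervalIntegral.integral_add]
    · exact integral_congr fun k _ => by ring
    all_goals exact Continuous.intervalIntegrable (by fun_prop) _ _
  refine (fun hmain => ⟨hmain, fun η0 _ => ?_⟩) ?_
  · rw [hsplit, integral_mul_besselJ0_mul hr.ne', integral_pow_three_mul_besselJ0_mul hr.ne',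
      integral_pow_five_mul_besselJ0_mul hr.ne', hz, huc]
    field_simp
    ring
  · simp_rw [mul_left_comm _ (η0 * ξ ^ 2)⁻¹, intervalIntegral.integral_const_mul, hmain]
    ring

/-- The two-dimensional Bessel–Lommel covariance formula. -/
theorem bessel_lommel_covariance_dim_two (ξ kc η1 r : ℝ)
    (hξ : 0 < ξ) (hkc : 0 < kc) (hη : -2 < η1) (hr : 0 < r)
    (z uc : ℝ) (hz : z = kc * r) (huc : uc = kc * ξ) :
    (∫ k in (0:ℝ)..kc, k * besselJ0 (k * r) * (1 + η1 * ξ ^ 2 * k ^ 2 + ξ ^ 4 * k ^ 4))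
      = kc ^ 2 *
        (besselJ1 z / z
          + η1 * uc ^ 2 * (2 * z * besselJ0 z + (z ^ 2 - 4) * besselJ1 z) / z ^ 3
          + uc ^ 4 * (4 * (z ^ 3 - 8 * z) * besselJ0 z
              + (z ^ 4 - 16 * z ^ 2 + 64) * besselJ1 z) / z ^ 5) ∧
    ∀ η0 : ℝ, 0 < η0 →
      (1 / (2 * Real.pi)) *
          (∫ k in (0:ℝ)..kc, k * besselJ0 (k * r) *
            ((η0 * ξ ^ 2)⁻¹ * (1 + η1 * ξ ^ 2 * k ^ 2 + ξ ^ 4 * k ^ 4)))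
        = (2 * Real.pi * η0 * ξ ^ 2)⁻¹ * (kc ^ 2 *
            (besselJ1 z / z
              + η1 * uc ^ 2 * (2 * z * besselJ0 z + (z ^ 2 - 4) * besselJ1 z) / z ^ 3
              + uc ^ 4 * (4 * (z ^ 3 - 8 * z) * besselJ0 z
                  + (z ^ 4 - 16 * z ^ 2 + 64) * besselJ1 z) / z ^ 5)) :=
  bessel_lommel_covariance_dim_two_general ξ kc η1 r hr z uc hz huc
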